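/- Let a ∈ ℂ and let I ⊆ F be the two-sided ideal generated by the three elements x₂x₁ − x₁x₂ − 2x₁², x₃x₁ − x₁x₃ − 2x₁x₂, and x₃x₂ − x₂x₃ − 2a x₂² + (4a − 2) x₁x₃ + (8a − 4) x₁x₂ − 4a(a+1) x₁². Then the images in F/I of the monomials x₁^{a₁} x₂^{a₂} x₃^{a₃}, over all a₁, a₂, a₃ ∈ ℕ, form a ℂ-basis of F/I. (This quotient is the Nichols algebra associated to the braiding of type R_{1,10} with t = 1; it has Gelfand–Kirillov dimension 3.) -/

import Mathlib

/-- The free associative unital `ℂ`-algebra on three generators. -/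
abbrev F : Type := FreeAlgebra ℂ (Fin 3)

/-- The generators `x₁ = X 0`, `x₂ = X 1`, `x₃ = X 2`. -/
noncomputable def X (i : Fin 3) : F := FreeAlgebra.ι ℂ i

/-- Generators: `x₂x₁ − x₁x₂ − 2x₁²`, `x₃x₁ − x₁x₃ − 2x₁x₂`, `x₃x₂ − x₂x₃ − 2a x₂² + (4a−2) x₁x₃ + (8a−4) x₁x₂ − 4a(a+1) x₁²`. -/
noncomputable def S (a : ℂ) : Set F :=
  {X 1 * X 0 - X 0 * X 1 - (2 : ℂ) • (X 0 * X 0),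
   X 2 * X 0 - X 0 * X 2 - (2 : ℂ) • (X 0 * X 1),
   X 2 * X 1 - X 1 * X 2 - (2 * a) • (X 1 * X 1) + (4 * a - 2) • (X 0 * X 2) + (8 * a - 4) • (X 0 * X 1) - (4 * a * (a + 1)) • (X 0 * X 0)}

/-- The relation whose two-sided-ideal closure is the ideal generated by `S`;
`RingQuot rel` is the quotient `F/I`. -/
def rel (a : ℂ) : F → F → Prop := fun x y => x ∈ S a ∧ y = 0

/-! Spanning: the relations rewrite `x₂x₁`, `x₃x₁`, `x₃x₂` as combinations of ordered words,
so the span of the ordered monomials `x₁^i x₂^j x₃^k` contains `1` and is stable under left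
multiplication by each generator, hence is everything.

Independence: on the vector space with basis `e_{ijk}` let `T₀, T₁, T₂` act as left
multiplication by `x₁, x₂, x₃` would act on `x₁^i x₂^j x₃^k` after reordering (for instance
`x₂ x₁^i = x₁^i x₂ + 2i x₁^{i+1}` gives `T₁`). These operators satisfy the defining relations, so
they give a representation of `F/I` in which `x₁^i x₂^j x₃^k` maps `e_{000}` to `e_{ijk}`. -/

section OrderedMonomials

variable {K R : Type*} [CommSemiring K] [Semiring R] [Algebra K R]

theorem Submodule.eq_top_of_one_mem_of_mul_mem {s : Set R} (hs : Algebra.adjoin K s = ⊤)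
    {M : Submodule K R} (h1 : (1 : R) ∈ M) (hmul : ∀ g ∈ s, ∀ v ∈ M, g * v ∈ M) : M = ⊤ := by
  have key (r : R) : ∀ v ∈ M, r * v ∈ M := by
    have hr : r ∈ Algebra.adjoin K s := hs ▸ Algebra.mem_top
    induction hr using Algebra.adjoin_induction with
    | mem g hg => exact hmul g hg
    | algebraMap c => exact fun v hv => (Algebra.smul_def c v).symm ▸ M.smul_mem c hv
    | add r₁ r₂ _ _ h₁ h₂ => exact fun v hv => (add_mul r₁ r₂ v).symm ▸ add_mem (h₁ v hv) (h₂ v hv)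
    | mul r₁ r₂ _ _ h₁ h₂ => exact fun v hv => (mul_assoc r₁ r₂ v).symm ▸ h₁ _ (h₂ v hv)
  exact Submodule.eq_top_iff'.mpr fun r => mul_one r ▸ key r 1 h1

theorem Submodule.mul_mem_span_range {ι : Type*} {f : ι → R} {g : R}
    (h : ∀ n, g * f n ∈ Submodule.span K (Set.range f)) {v : R}
    (hv : v ∈ Submodule.span K (Set.range f)) : g * v ∈ Submodule.span K (Set.range f) :=
  (Submodule.span_le (p := (Submodule.span K (Set.range f)).comap (LinearMap.mulLeft K g)) |>.mpr
    (Set.range_subset_iff.mpr h)) hv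

def orderedMonomial (x y z : R) (n : ℕ × ℕ × ℕ) : R := x ^ n.1 * y ^ n.2.1 * z ^ n.2.2

section
variable (x y z : R)

theorem orderedMonomial_zero : orderedMonomial x y z (0, 0, 0) = 1 := by
  simp [orderedMonomial]

theorem orderedMonomial_succ_fst (i j k : ℕ) :
    orderedMonomial x y z (i + 1, j, k) = x * orderedMonomial x y z (i, j, k) := by
  simp only [orderedMonomial, pow_succ', mul_assoc]

theorem orderedMonomial_zero_succ (j k : ℕ) :
    orderedMonomial x y z (0, j + 1, k) = y * orderedMonomial x y z (0, j, k) := by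
  simp only [orderedMonomial, pow_zero, one_mul, pow_succ', mul_assoc]

theorem orderedMonomial_zero_zero_succ (k : ℕ) :
    orderedMonomial x y z (0, 0, k + 1) = z * orderedMonomial x y z (0, 0, k) := by
  simp only [orderedMonomial, pow_zero, one_mul, pow_succ']

end

theorem span_orderedMonomial_eq_top {x y z : R} {α β c₁ c₂ c₃ c₄ : K}
    (hyx : y * x = x * y + α • (x * x)) (hzx : z * x = x * z + β • (x * y))
    (hzy : z * y = y * z + c₁ • (y * y) + c₂ • (x * z) + c₃ • (x * y) + c₄ • (x * x))
    (hgen : Algebra.adjoin K {x, y, z} = ⊤) :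
    Submodule.span K (Set.range (orderedMonomial x y z)) = ⊤ := by
  set M := Submodule.span K (Set.range (orderedMonomial x y z))
  have mem (n) : orderedMonomial x y z n ∈ M := Submodule.subset_span ⟨n, rfl⟩
  have hx : ∀ v ∈ M, x * v ∈ M := fun v =>
    Submodule.mul_mem_span_range fun ⟨i, j, k⟩ => orderedMonomial_succ_fst x y z i j k ▸ mem _
  have hy : ∀ v ∈ M, y * v ∈ M := by
    refine fun v => Submodule.mul_mem_span_range fun ⟨i, j, k⟩ => ?_
    induction i with
    | zero => exact orderedMonomial_zero_succ x y z j k ▸ mem _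
    | succ i ih =>
      rw [orderedMonomial_succ_fst, ← mul_assoc, hyx, add_mul, smul_mul_assoc, mul_assoc,
        mul_assoc]
      exact add_mem (hx _ ih) (M.smul_mem _ (hx _ (hx _ (mem _))))
  have hz : ∀ v ∈ M, z * v ∈ M := by
    refine fun v => Submodule.mul_mem_span_range fun ⟨i, j, k⟩ => ?_
    induction i with
    | zero =>
      induction j with
      | zero => exact orderedMonomial_zero_zero_succ x y z k ▸ mem _
      | succ j ih =>
        rw [orderedMonomial_zero_succ, ← mul_assoc, hzy]
        simp only [add_mul, smul_mul_assoc, mul_assoc]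
        exact add_mem (add_mem (add_mem (add_mem (hy _ ih) (M.smul_mem _ (hy _ (hy _ (mem _)))))
          (M.smul_mem _ (hx _ ih))) (M.smul_mem _ (hx _ (hy _ (mem _)))))
          (M.smul_mem _ (hx _ (hx _ (mem _))))
    | succ i ih =>
      rw [orderedMonomial_succ_fst, ← mul_assoc, hzx, add_mul, smul_mul_assoc, mul_assoc,
        mul_assoc]
      exact add_mem (hx _ ih) (M.smul_mem _ (hx _ (hy _ (mem _))))
  refine Submodule.eq_top_of_one_mem_of_mul_mem hgen (orderedMonomial_zero x y z ▸ mem _) ?_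
  simpa only [Set.mem_insert_iff, Set.mem_singleton_iff, forall_eq_or_imp, forall_eq] using
    ⟨hx, hy, hz⟩

end OrderedMonomials

theorem LinearIndependent.of_algHom_apply {ι K A M : Type*} [CommSemiring K] [Semiring A]
    [Algebra K A] [AddCommMonoid M] [Module K M] (ρ : A →ₐ[K] Module.End K M) (v : M)
    {f : ι → A} (h : LinearIndependent K fun i => ρ (f i) v) : LinearIndependent K f :=
  LinearIndependent.of_comp ((LinearMap.applyₗ v).comp ρ.toLinearMap) h

namespace R110

abbrev V : Type := (ℕ × ℕ × ℕ) →₀ ℂ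

noncomputable abbrev E : Module.Basis (ℕ × ℕ × ℕ) ℂ V := Finsupp.basisSingleOne

noncomputable def T₀ : Module.End ℂ V := E.constr ℂ fun n => E (n.1 + 1, n.2.1, n.2.2)

noncomputable def T₁ : Module.End ℂ V :=
  E.constr ℂ fun n => E (n.1, n.2.1 + 1, n.2.2) + (2 * n.1 : ℂ) • E (n.1 + 1, n.2.1, n.2.2)

/-- The `i + 1` clause is the relation `x₃x₁ = x₁x₃ + 2x₁x₂` and the `(0, j + 1)` clause the
relation for `x₃x₂`, each applied to a basis vector; `T₂_T₁_E` extends the latter to all `i`. -/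
noncomputable def T₂OnBasis (a : ℂ) : ℕ → ℕ → ℕ → V
  | 0, 0, k => E (0, 0, k + 1)
  | 0, j + 1, k =>
      T₁ (T₂OnBasis a 0 j k) + (2 * a) • T₁ (T₁ (E (0, j, k)))
        - (4 * a - 2) • T₀ (T₂OnBasis a 0 j k) - (8 * a - 4) • T₀ (T₁ (E (0, j, k)))
        + (4 * a * (a + 1)) • T₀ (T₀ (E (0, j, k)))
  | i + 1, j, k => T₀ (T₂OnBasis a i j k) + (2 : ℂ) • T₀ (T₁ (E (i, j, k)))

noncomputable def T₂ (a : ℂ) : Module.End ℂ V := E.constr ℂ fun n => T₂OnBasis a n.1 n.2.1 n.2.2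

theorem T₀_E (i j k : ℕ) : T₀ (E (i, j, k)) = E (i + 1, j, k) := E.constr_basis ..

theorem T₁_E (i j k : ℕ) :
    T₁ (E (i, j, k)) = E (i, j + 1, k) + (2 * i : ℂ) • E (i + 1, j, k) := E.constr_basis ..

theorem T₁_E_zero (j k : ℕ) : T₁ (E (0, j, k)) = E (0, j + 1, k) := by
  rw [T₁_E]
  simp

theorem T₂_E (a : ℂ) (i j k : ℕ) : T₂ a (E (i, j, k)) = T₂OnBasis a i j k := E.constr_basis ..

theorem T₁_T₀ (v : V) : T₁ (T₀ v) = T₀ (T₁ v) + (2 : ℂ) • T₀ (T₀ v) := by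
  have : T₁ ∘ₗ T₀ = T₀ ∘ₗ T₁ + (2 : ℂ) • (T₀ ∘ₗ T₀) := E.ext fun ⟨i, j, k⟩ => by
    simp only [LinearMap.comp_apply, LinearMap.add_apply, LinearMap.smul_apply, T₀_E, T₁_E,
      map_add, map_smul]
    push_cast
    module
  simpa using LinearMap.congr_fun this v

theorem T₂_T₀ (a : ℂ) (v : V) : T₂ a (T₀ v) = T₀ (T₂ a v) + (2 : ℂ) • T₀ (T₁ v) := by
  have : T₂ a ∘ₗ T₀ = T₀ ∘ₗ T₂ a + (2 : ℂ) • (T₀ ∘ₗ T₁) := E.ext fun ⟨i, j, k⟩ => by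
    simp only [LinearMap.comp_apply, LinearMap.add_apply, LinearMap.smul_apply, T₀_E, T₂_E,
      T₂OnBasis]
  simpa using LinearMap.congr_fun this v

theorem T₂_T₁_E (a : ℂ) (i j k : ℕ) :
    T₂ a (T₁ (E (i, j, k))) =
      T₁ (T₂ a (E (i, j, k))) + (2 * a) • T₁ (T₁ (E (i, j, k)))
        - (4 * a - 2) • T₀ (T₂ a (E (i, j, k))) - (8 * a - 4) • T₀ (T₁ (E (i, j, k)))
        + (4 * a * (a + 1)) • T₀ (T₀ (E (i, j, k))) := by
  induction i with
  | zero => rw [T₁_E_zero, T₂_E, T₂_E, T₂OnBasis, T₁_E_zero]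
  | succ i ih =>
    rw [← T₀_E]
    simp only [T₁_T₀, T₂_T₀, ih, map_add, map_sub, map_smul, smul_add]
    module

theorem T₂_T₁ (a : ℂ) (v : V) :
    T₂ a (T₁ v) = T₁ (T₂ a v) + (2 * a) • T₁ (T₁ v) - (4 * a - 2) • T₀ (T₂ a v)
      - (8 * a - 4) • T₀ (T₁ v) + (4 * a * (a + 1)) • T₀ (T₀ v) := by
  have : T₂ a ∘ₗ T₁ = T₁ ∘ₗ T₂ a + (2 * a) • (T₁ ∘ₗ T₁) - (4 * a - 2) • (T₀ ∘ₗ T₂ a)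
      - (8 * a - 4) • (T₀ ∘ₗ T₁) + (4 * a * (a + 1)) • (T₀ ∘ₗ T₀) :=
    E.ext fun ⟨i, j, k⟩ => by simpa using T₂_T₁_E a i j k
  simpa using LinearMap.congr_fun this v

variable (a : ℂ)

noncomputable def rep : F →ₐ[ℂ] Module.End ℂ V := FreeAlgebra.lift ℂ ![T₀, T₁, T₂ a]

theorem rep_X_zero : rep a (X 0) = T₀ := by simp [rep, X]
theorem rep_X_one : rep a (X 1) = T₁ := by simp [rep, X]
theorem rep_X_two : rep a (X 2) = T₂ a := by simp [rep, X]

theorem rep_eq_of_rel {x y : F} (h : rel a x y) : rep a x = rep a y := by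
  obtain ⟨hx, rfl⟩ := h
  rw [map_zero]
  rcases hx with rfl | rfl | rfl <;> refine LinearMap.ext fun v => ?_ <;>
    simp only [map_sub, map_add, map_mul, map_smul, rep_X_zero, rep_X_one, rep_X_two,
      LinearMap.sub_apply, LinearMap.add_apply, LinearMap.smul_apply, Module.End.mul_apply,
      LinearMap.zero_apply, T₁_T₀, T₂_T₀, T₂_T₁] <;>
    module

noncomputable def repQuot : RingQuot (rel a) →ₐ[ℂ] Module.End ℂ V :=
  RingQuot.liftAlgHom ℂ ⟨rep a, fun _ _ => rep_eq_of_rel a⟩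

noncomputable def gen (i : Fin 3) : RingQuot (rel a) := RingQuot.mkAlgHom ℂ (rel a) (X i)

theorem repQuot_gen (i : Fin 3) : repQuot a (gen a i) = rep a (X i) :=
  RingQuot.liftAlgHom_mkAlgHom_apply ..

theorem T₂_pow_E (k : ℕ) : (T₂ a ^ k) (E (0, 0, 0)) = E (0, 0, k) := by
  induction k with
  | zero => rfl
  | succ k ih => rw [pow_succ', Module.End.mul_apply, ih, T₂_E, T₂OnBasis]

theorem T₁_pow_E (j k : ℕ) : (T₁ ^ j) (E (0, 0, k)) = E (0, j, k) := by
  induction j with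
  | zero => rfl
  | succ j ih => rw [pow_succ', Module.End.mul_apply, ih, T₁_E_zero]

theorem T₀_pow_E (i j k : ℕ) : (T₀ ^ i) (E (0, j, k)) = E (i, j, k) := by
  induction i with
  | zero => rfl
  | succ i ih => rw [pow_succ', Module.End.mul_apply, ih, T₀_E]

theorem repQuot_orderedMonomial_apply (n : ℕ × ℕ × ℕ) :
    repQuot a (orderedMonomial (gen a 0) (gen a 1) (gen a 2) n) (E (0, 0, 0)) = E n := by
  obtain ⟨i, j, k⟩ := n
  simp only [orderedMonomial, map_mul, map_pow, repQuot_gen, rep_X_zero, rep_X_one, rep_X_two,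
    Module.End.mul_apply, T₂_pow_E, T₁_pow_E, T₀_pow_E]

theorem mkAlgHom_eq_zero_of_mem {x : F} (hx : x ∈ S a) : RingQuot.mkAlgHom ℂ (rel a) x = 0 := by
  simpa using RingQuot.mkAlgHom_rel ℂ (show rel a x 0 from ⟨hx, rfl⟩)

theorem gen_one_mul_gen_zero :
    gen a 1 * gen a 0 = gen a 0 * gen a 1 + (2 : ℂ) • (gen a 0 * gen a 0) := by
  have h := mkAlgHom_eq_zero_of_mem a (x := X 1 * X 0 - X 0 * X 1 - (2 : ℂ) • (X 0 * X 0))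
    (by simp [S])
  simp only [map_sub, map_mul, map_smul] at h
  rwa [sub_sub, sub_eq_zero] at h

theorem gen_two_mul_gen_zero :
    gen a 2 * gen a 0 = gen a 0 * gen a 2 + (2 : ℂ) • (gen a 0 * gen a 1) := by
  have h := mkAlgHom_eq_zero_of_mem a (x := X 2 * X 0 - X 0 * X 2 - (2 : ℂ) • (X 0 * X 1))
    (by simp [S])
  simp only [map_sub, map_mul, map_smul] at h
  rwa [sub_sub, sub_eq_zero] at h

theorem gen_two_mul_gen_one :
    gen a 2 * gen a 1 = gen a 1 * gen a 2 + (2 * a) • (gen a 1 * gen a 1)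
      + (2 - 4 * a) • (gen a 0 * gen a 2) + (4 - 8 * a) • (gen a 0 * gen a 1)
      + (4 * a * (a + 1)) • (gen a 0 * gen a 0) := by
  have h := mkAlgHom_eq_zero_of_mem a (x := X 2 * X 1 - X 1 * X 2 - (2 * a) • (X 1 * X 1)
    + (4 * a - 2) • (X 0 * X 2) + (8 * a - 4) • (X 0 * X 1) - (4 * a * (a + 1)) • (X 0 * X 0))
    (by simp [S])
  simp only [map_sub, map_add, map_mul, map_smul] at h
  simp only [gen]
  rw [← sub_eq_zero, ← h]
  module

theorem adjoin_gen_eq_top : Algebra.adjoin ℂ {gen a 0, gen a 1, gen a 2} = ⊤ := by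
  have hrange : {gen a 0, gen a 1, gen a 2} =
      RingQuot.mkAlgHom ℂ (rel a) '' Set.range (FreeAlgebra.ι ℂ) := by
    ext; simp [gen, X, Fin.exists_fin_succ, eq_comm]
  rw [hrange, Algebra.adjoin_image, FreeAlgebra.adjoin_range_ι, Algebra.map_top,
    AlgHom.range_eq_top]
  exact RingQuot.mkAlgHom_surjective ℂ (rel a)

end R110

open R110

/-- the images in `F/I` of the monomials `x₁^{a₁} x₂^{a₂} x₃^{a₃}` form a `ℂ`-basis. -/
theorem basis_R110_t_one (a : ℂ) :
    LinearIndependent ℂ (fun e : ℕ × ℕ × ℕ =>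
      RingQuot.mkAlgHom ℂ (rel a) (X 0 ^ e.1 * X 1 ^ e.2.1 * X 2 ^ e.2.2)) ∧
    Submodule.span ℂ (Set.range (fun e : ℕ × ℕ × ℕ =>
      RingQuot.mkAlgHom ℂ (rel a) (X 0 ^ e.1 * X 1 ^ e.2.1 * X 2 ^ e.2.2))) = ⊤ := by
  have hfamily : (fun e : ℕ × ℕ × ℕ =>
      RingQuot.mkAlgHom ℂ (rel a) (X 0 ^ e.1 * X 1 ^ e.2.1 * X 2 ^ e.2.2)) =
      orderedMonomial (gen a 0) (gen a 1) (gen a 2) := by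
    ext; simp [orderedMonomial, gen]
  rw [hfamily]
  refine ⟨LinearIndependent.of_algHom_apply (repQuot a) (E (0, 0, 0)) ?_,
    span_orderedMonomial_eq_top (gen_one_mul_gen_zero a) (gen_two_mul_gen_zero a)
      (gen_two_mul_gen_one a) (adjoin_gen_eq_top a)⟩
  simpa only [repQuot_orderedMonomial_apply] using E.linearIndependent
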